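/- At the two-species equilibrium (1/4, 1/4, 0) of the three-species segregation kinetics, the Jacobian matrix equals !![−1/4, −3/4, −3/4; −3/4, −1/4, −3/4; 0, 0, −1/2], its characteristic polynomial equals (X + 1)(X + 1/2)(X − 1/2), and in particular 1/2 is a positive eigenvalue, so this equilibrium is not linearly stable. -/

import Mathlib

open Polynomial
open scoped Matrix

/-! The Jacobian of the field `mᵢ (1 - (A m)ᵢ)` is `diag (1 - A m) - diag m * A`. At
`m₀ = (1/4, 1/4, 0)` the third row reduces to `(0, 0, 1 - (A m₀)₃) = (0, 0, -1/2)`, so the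
characteristic polynomial is `X + 1/2` times that of the symmetric `2 × 2` block, whose
eigenvectors `(1, 1)` and `(1, -1)` give `-1` and `1/2`: the equilibrium is unstable against
trading one species for the other. -/

variable {ι : Type*} [Fintype ι]

theorem hasFDerivAt_mul_one_sub_sum (A : Matrix ι ι ℝ) (i : ι) (m : ι → ℝ) :
    HasFDerivAt (fun m : ι → ℝ => m i * (1 - ∑ j, A i j * m j))
      (-(m i • ∑ j, A i j • ContinuousLinearMap.proj j : (ι → ℝ) →L[ℝ] ℝ)
        + (1 - ∑ j, A i j * m j) • (ContinuousLinearMap.proj i : (ι → ℝ) →L[ℝ] ℝ)) m := by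
  have hsum : HasFDerivAt (fun m : ι → ℝ => ∑ j, A i j * m j)
      (∑ j, A i j • ContinuousLinearMap.proj j : (ι → ℝ) →L[ℝ] ℝ) m :=
    HasFDerivAt.fun_sum fun j _ => (hasFDerivAt_apply j m).const_mul (A i j)
  simpa using (hasFDerivAt_apply i m).fun_mul ((hasFDerivAt_const 1 m).fun_sub hsum)

theorem fderiv_mul_one_sub_sum_apply (A : Matrix ι ι ℝ) (i : ι) (m v : ι → ℝ) :
    fderiv ℝ (fun m : ι → ℝ => m i * (1 - ∑ j, A i j * m j)) m v =
      v i * (1 - ∑ j, A i j * m j) - m i * ∑ j, A i j * v j := by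
  simp only [(hasFDerivAt_mul_one_sub_sum A i m).fderiv, add_apply, neg_apply, smul_apply,
    sum_apply, ContinuousLinearMap.proj_apply, smul_eq_mul, Finset.mul_sum]
  ring

theorem fderiv_mul_one_sub_sum_single [DecidableEq ι] (A : Matrix ι ι ℝ) (m : ι → ℝ) (i j : ι) :
    fderiv ℝ (fun m : ι → ℝ => m i * (1 - ∑ k, A i k * m k)) m (Pi.single j 1) =
      (Matrix.diagonal (1 - A *ᵥ m) - Matrix.diagonal m * A : Matrix ι ι ℝ) i j := by
  rw [fderiv_mul_one_sub_sum_apply]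
  obtain rfl | hij := eq_or_ne i j <;> simp [Matrix.mulVec, dotProduct, Pi.single_apply, *]

theorem charpoly_segregation_jacobian :
    (!![-1/4, -3/4, -3/4; -3/4, -1/4, -3/4; 0, 0, -1/2] : Matrix (Fin 3) (Fin 3) ℝ).charpoly
      = (X + 1) * (X + C (1/2)) * (X - C (1/2)) := by
  refine Polynomial.funext fun x => ?_
  simp only [Matrix.charpoly, Matrix.det_fin_three, Matrix.charmatrix_apply, Matrix.diagonal_apply,
    Matrix.of_apply, Matrix.cons_val', Matrix.cons_val_zero, Matrix.cons_val_one, Matrix.cons_val,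
    Matrix.cons_val_fin_one, Fin.reduceEq, ↓reduceIte, map_zero, eval_sub, eval_mul, eval_add,
    eval_X, eval_C, eval_one, eval_zero]
  ring

/-- At the two-species equilibrium (1/4, 1/4, 0) of the three-species segregation
kinetics (a_{ii} = 1, a_{ij} = 3 for i ≠ j), the Jacobian equals
!![−1/4, −3/4, −3/4; −3/4, −1/4, −3/4; 0, 0, −1/2], its characteristic polynomial is
(X + 1)(X + 1/2)(X − 1/2), and 1/2 is a positive eigenvalue, so the equilibrium is not
linearly stable. -/
theorem segregation_jacobian_two_species_equilibrium
    (a : Fin 3 → Fin 3 → ℝ) (ha : ∀ i j, a i j = if i = j then 1 else 3)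
    (F : Fin 3 → (Fin 3 → ℝ) → ℝ)
    (hF : ∀ i m, F i m = m i * (1 - ∑ j, a i j * m j))
    (m₀ : Fin 3 → ℝ) (hm₀ : m₀ = ![1/4, 1/4, 0])
    (J : Matrix (Fin 3) (Fin 3) ℝ)
    (hJ : ∀ i j, J i j = fderiv ℝ (F i) m₀ (Pi.single j 1)) :
    J = !![-1/4, -3/4, -3/4; -3/4, -1/4, -3/4; 0, 0, -1/2] ∧
    J.charpoly = (X + 1) * (X + C (1/2)) * (X - C (1/2)) ∧
    (1/2 : ℝ) ∈ spectrum ℝ J ∧ (0 : ℝ) < 1/2 := by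
  have hJ_eq : J = Matrix.diagonal (1 - a *ᵥ m₀) - Matrix.diagonal m₀ * Matrix.of a := by
    ext i j
    rw [hJ, funext (hF i)]
    exact fderiv_mul_one_sub_sum_single a m₀ i j
  have hJ_val : J = !![-1/4, -3/4, -3/4; -3/4, -1/4, -3/4; 0, 0, -1/2] := by
    rw [hJ_eq, hm₀]
    ext i j
    fin_cases i <;> fin_cases j <;>
      simp [ha, Matrix.mulVec, dotProduct, Fin.sum_univ_three, Fin.ext_iff] <;> norm_num
  have hchar := hJ_val ▸ charpoly_segregation_jacobian
  refine ⟨hJ_val, hchar, Matrix.mem_spectrum_of_isRoot_charpoly ?_, by norm_num⟩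
  simp [hchar]
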